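/- Let n ≥ 6 be even and let m be an odd integer with (n+4)/2 ≤ m ≤ n−1. Then the sequence consisting of (m+3)/2, then (n+3−m)/2, then the number 2 repeated (n−1−m)/2 times, then the number 1 repeated m − (n+4)/2 times, is a partition of n and its value λ equals m. -/

import Mathlib

/-!
`λ(p)` is the sum of the contents `j - i` of the cells of the Young diagram of `p`. Hence
stacking the rows of `L₂` below those of `L₁` adds `λ(L₂)`, shifted down by `L₁.length` per
cell of `L₂`, and a block of `r` rows of length `x` contributes `r x (x - r) / 2`.
Writing `n = 4c + 2d + 6` and `m = 2c + 2d + 5`, the sequence is `(c+d+4, c+2, 2^c, 1^d)`,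
and these two rules evaluate its `λ` to `m`.
-/

/-- `λ(p) = (1/2)·Σ_{j=1}^k n_j·(n_j − 2j + 1)` for a finite sequence of naturals. -/
def transLam (L : List ℕ) : ℚ :=
  (∑ j ∈ Finset.range L.length,
    (L.getD j 0 : ℚ) * ((L.getD j 0 : ℚ) - 2 * ((j : ℚ) + 1) + 1)) / 2

/-- A partition of `n`: a nonincreasing list of positive integers summing to `n`. -/
def IsPartitionOf (n : ℕ) (L : List ℕ) : Prop :=
  L.Pairwise (· ≥ ·) ∧ (∀ x ∈ L, 0 < x) ∧ L.sum = n

open Finset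

lemma sum_range_length_getD (L : List ℕ) :
    ∑ j ∈ range L.length, (L.getD j 0 : ℚ) = L.sum := by
  induction L with
  | nil => simp
  | cons a L ih =>
    simp only [List.length_cons, sum_range_succ', List.getD_cons_succ, List.getD_cons_zero, ih,
      List.sum_cons]
    push_cast; ring

@[simp]
lemma transLam_nil : transLam [] = 0 := by simp [transLam]

lemma transLam_cons (a : ℕ) (L : List ℕ) :
    transLam (a :: L) = a * (a - 1) / 2 + transLam L - L.sum := by
  have hshift : ∀ j ∈ range L.length,
      ((L.getD j 0 : ℕ) : ℚ) * ((L.getD j 0 : ℚ) - 2 * (((j + 1 : ℕ) : ℚ) + 1) + 1)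
        = (L.getD j 0 : ℚ) * ((L.getD j 0 : ℚ) - 2 * ((j : ℚ) + 1) + 1)
          - 2 * (L.getD j 0 : ℚ) := by
    intro j _; push_cast; ring
  simp only [transLam, List.length_cons, sum_range_succ', List.getD_cons_succ,
    List.getD_cons_zero]
  rw [sum_congr rfl hshift, sum_sub_distrib, ← mul_sum, sum_range_length_getD]
  push_cast; ring

lemma transLam_append (L₁ L₂ : List ℕ) :
    transLam (L₁ ++ L₂) = transLam L₁ + transLam L₂ - L₁.length * L₂.sum := by
  induction L₁ with
  | nil => simp
  | cons a L₁ ih =>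
    simp only [List.cons_append, transLam_cons, ih, List.sum_append, List.length_cons]
    push_cast; ring

lemma transLam_replicate (r x : ℕ) :
    transLam (List.replicate r x) = r * x * (x - r) / 2 := by
  induction r with
  | zero => simp
  | succ r ih =>
    rw [List.replicate_succ, transLam_cons, ih, List.sum_replicate, smul_eq_mul]
    push_cast; ring

lemma isPartitionOf_pair_append_twos_ones {a b : ℕ} (hab : b ≤ a) (hb : 2 ≤ b) (c d : ℕ) :
    IsPartitionOf (a + b + 2 * c + d)
      ([a, b] ++ List.replicate c 2 ++ List.replicate d 1) := by
  refine ⟨?_, ?_, ?_⟩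
  · simp only [List.pairwise_append, List.pairwise_pair, List.pairwise_replicate,
      List.mem_append, List.mem_cons, List.mem_replicate, List.not_mem_nil, or_false]
    refine ⟨⟨hab, .inr le_rfl, ?_⟩, .inr le_rfl, ?_⟩ <;> rintro x hx y ⟨-, rfl⟩ <;> omega
  · simp only [List.mem_append, List.mem_cons, List.mem_replicate, List.not_mem_nil, or_false]
    rintro x ((hx | ⟨-, rfl⟩) | ⟨-, rfl⟩) <;> omega
  · simp only [List.sum_append, List.sum_cons, List.sum_nil, List.sum_replicate, smul_eq_mul]
    ring

theorem case_even_n_odd_lambda_general (n m : ℕ) (hneven : Even n) (hmodd : Odd m)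
    (h1 : n + 4 ≤ 2 * m) (h2 : m ≤ n - 1) :
    IsPartitionOf n
      ([(m + 3) / 2, (n + 3 - m) / 2] ++ List.replicate ((n - 1 - m) / 2) 2
        ++ List.replicate (m - (n + 4) / 2) 1) ∧
    transLam
      ([(m + 3) / 2, (n + 3 - m) / 2] ++ List.replicate ((n - 1 - m) / 2) 2
        ++ List.replicate (m - (n + 4) / 2) 1) = (m : ℚ) := by
  obtain ⟨c, d, hn, hm⟩ : ∃ c d, n = 4 * c + 2 * d + 6 ∧ m = 2 * c + 2 * d + 5 := by
    obtain ⟨a, rfl⟩ := hneven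
    obtain ⟨b, rfl⟩ := hmodd
    exact ⟨a - b - 1, 2 * b - a - 1, by omega, by omega⟩
  rw [show (m + 3) / 2 = c + d + 4 by omega, show (n + 3 - m) / 2 = c + 2 by omega,
    show (n - 1 - m) / 2 = c by omega, show m - (n + 4) / 2 = d by omega]
  constructor
  · have h := isPartitionOf_pair_append_twos_ones (a := c + d + 4) (b := c + 2)
      (by omega) le_add_self c d
    rwa [show c + d + 4 + (c + 2) + 2 * c + d = n by omega] at h
  · simp only [transLam_append, transLam_cons, transLam_nil, transLam_replicate,
      List.sum_replicate, List.sum_cons, List.sum_nil, List.length_append, List.length_cons,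
      List.length_nil, List.length_replicate, smul_eq_mul, hm]
    push_cast
    ring

theorem case_even_n_odd_lambda (n m : ℕ) (hn : 6 ≤ n) (hneven : Even n) (hmodd : Odd m)
    (h1 : n + 4 ≤ 2 * m) (h2 : m ≤ n - 1) :
    IsPartitionOf n
      ([(m + 3) / 2, (n + 3 - m) / 2] ++ List.replicate ((n - 1 - m) / 2) 2
        ++ List.replicate (m - (n + 4) / 2) 1) ∧
    transLam
      ([(m + 3) / 2, (n + 3 - m) / 2] ++ List.replicate ((n - 1 - m) / 2) 2
        ++ List.replicate (m - (n + 4) / 2) 1) = (m : ℚ) :=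
  case_even_n_odd_lambda_general n m hneven hmodd h1 h2
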